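/- Let gAnd, gEz, gJac : Prop denote the guilt of Andrew, Ezra, Jacob, and let τ assign to each one of the two types PT (partial truth-teller) or RL (responsible liar). Assume the semantic translations of their assertions: (Andrew, 'Ezra did it. Ezra did it alone'): if τ(Andrew) = PT then gEz ∧ (gEz ∧ ¬gAnd ∧ ¬gJac), and if τ(Andrew) = RL then ¬gEz ∧ ¬(gEz ∧ ¬gAnd ∧ ¬gJac); (Ezra, 'I stole Johnathan's pet dinosaur. Jacob is not guilty'): if τ(Ezra) = PT then False ∧ ¬gJac (a PT can never assert his own guilt), and if τ(Ezra) = RL then gJac (the clause about Jacob is a lie, while 'I stole it' is the RL's automatic guilt-assertion); (Jacob, 'Exactly two people committed the crime. I had nothing to do with this case'): if τ(Jacob) = PT then (exactly two of gAnd, gEz, gJac hold), and if τ(Jacob) = RL then False (an RL can never assert his own innocence). Then gAnd ∧ gJac ∧ ¬gEz, and τ(Andrew) = RL, τ(Ezra) = RL, τ(Jacob) = PT: Andrew and Jacob stole the pet dinosaur. -/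
import Mathlib


/-- The two types of people at the party. -/
inductive PType : Type
  | PT  -- partial truth-teller
  | RL  -- responsible liar
  deriving DecidableEq

/-- The three suspects in Will's puzzle. -/
inductive Person : Type
  | Andrew | Ezra | Jacob
  deriving DecidableEq

/-- Exactly two of three propositions hold. -/
def ExactlyTwoOfThree (a b c : Prop) : Prop :=
  (a ∧ b ∧ ¬c) ∨ (a ∧ c ∧ ¬b) ∨ (b ∧ c ∧ ¬a)

/-- Will's puzzle: each suspect is a partial truth-teller (PT) or a responsible
liar (RL). Andrew and Jacob stole the pet dinosaur; Andrew and Ezra are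
responsible liars and Jacob is a partial truth-teller. -/
theorem wills_puzzle (gAnd gEz gJac : Prop) (τ : Person → PType)
    (hAndrew : (τ Person.Andrew = .PT → gEz ∧ (gEz ∧ ¬gAnd ∧ ¬gJac)) ∧
      (τ Person.Andrew = .RL → ¬gEz ∧ ¬(gEz ∧ ¬gAnd ∧ ¬gJac)))
    (hEzra : (τ Person.Ezra = .PT → False ∧ ¬gJac) ∧
      (τ Person.Ezra = .RL → gJac))
    (hJacob : (τ Person.Jacob = .PT → ExactlyTwoOfThree gAnd gEz gJac) ∧
      (τ Person.Jacob = .RL → False)) :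
    (gAnd ∧ gJac ∧ ¬gEz) ∧
      τ Person.Andrew = .RL ∧ τ Person.Ezra = .RL ∧ τ Person.Jacob = .PT := by
  obtain ⟨hA1, hA2⟩ := hAndrew
  obtain ⟨hE1, hE2⟩ := hEzra
  obtain ⟨hJ1, hJ2⟩ := hJacob
  cases hJ : τ Person.Jacob with
  | RL => exact (hJ2 hJ).elim
  | PT =>
    cases hE : τ Person.Ezra with
    | PT => exact ((hE1 hE).1).elim
    | RL =>
      have hgJ := hE2 hE
      cases hA : τ Person.Andrew with
      | PT => exact absurd hgJ (hA1 hA).2.2.2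
      | RL =>
        have hnE := (hA2 hA).1
        have := hJ1 hJ
        rcases this with ⟨_,hb,_⟩|⟨ha,_,_⟩|⟨hb,_,_⟩
        · exact absurd hb hnE
        · exact ⟨⟨ha, hgJ, hnE⟩, rfl, rfl, rfl⟩
        · exact absurd hb hnE
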